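/- Combined bound correctness (Theorem 5.1 of the paper): with roi ⊆ R̄ and R̲ ⊆ roi, bin width Δ > 0, lv' = Δ·⌊lv/Δ⌋, uv' = Δ·⌈uv/Δ⌉, define θ̄₁ = CP(mask, R̄, (lv', uv')) and θ̄₂ = CP(mask, R̲, (lv', uv')) + |roi| − |R̲|. Then min(θ̄₁, θ̄₂) ≥ CP(mask, roi, (lv, uv)). -/
import Mathlib


open Finset

/-- Count of pixels in region `R` whose mask value lies in `[lv, uv)`. -/
noncomputable def CP (mask : ℤ × ℤ → ℝ) (R : Finset (ℤ × ℤ)) (lv uv : ℝ) : ℕ :=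
  (R.filter (fun p => lv ≤ mask p ∧ mask p < uv)).card

theorem combined_upper_bound (mask : ℤ × ℤ → ℝ)
    (roi Rbar Runder : Finset (ℤ × ℤ))
    (hsub1 : roi ⊆ Rbar) (hsub2 : Runder ⊆ roi)
    (lv uv Δ : ℝ) (hΔ : 0 < Δ) (hlu : lv ≤ uv) :
    (CP mask roi lv uv : ℤ) ≤
      min ((CP mask Rbar (Δ * ⌊lv / Δ⌋) (Δ * ⌈uv / Δ⌉) : ℤ))
          ((CP mask Runder (Δ * ⌊lv / Δ⌋) (Δ * ⌈uv / Δ⌉) : ℤ)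
            + roi.card - Runder.card) := by
  have hl' : Δ * ⌊lv / Δ⌋ ≤ lv := by
    have := Int.floor_le (lv / Δ)
    calc Δ * ⌊lv / Δ⌋ ≤ Δ * (lv / Δ) := by
          exact mul_le_mul_of_nonneg_left this hΔ.le
      _ = lv := by field_simp
  have hu' : uv ≤ Δ * ⌈uv / Δ⌉ := by
    have := Int.le_ceil (uv / Δ)
    calc uv = Δ * (uv / Δ) := by field_simp
      _ ≤ Δ * ⌈uv / Δ⌉ := mul_le_mul_of_nonneg_left this hΔ.le
  have himp : ∀ p, (lv ≤ mask p ∧ mask p < uv) →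
      ((Δ * ⌊lv / Δ⌋ : ℝ) ≤ mask p ∧ mask p < Δ * ⌈uv / Δ⌉) := by
    intro p ⟨h1, h2⟩
    exact ⟨hl'.trans h1, h2.trans_le hu'⟩
  refine le_min ?_ ?_
  · exact_mod_cast Finset.card_le_card (fun p hp => by
      simp only [Finset.mem_filter] at hp ⊢
      exact ⟨hsub1 hp.1, himp p hp.2⟩)
  · have hcard : Runder.card ≤ roi.card := Finset.card_le_card hsub2
    have h1 : CP mask roi lv uv ≤
        CP mask Runder (Δ * ⌊lv / Δ⌋) (Δ * ⌈uv / Δ⌉) + (roi.card - Runder.card) := by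
      unfold CP
      have hsub : roi.filter (fun p => lv ≤ mask p ∧ mask p < uv) ⊆
          Runder.filter (fun p => (Δ * ⌊lv / Δ⌋ : ℝ) ≤ mask p ∧ mask p < Δ * ⌈uv / Δ⌉)
            ∪ (roi \ Runder) := by
        intro p hp
        simp only [Finset.mem_filter, Finset.mem_union, Finset.mem_sdiff] at hp ⊢
        by_cases h : p ∈ Runder
        · exact Or.inl ⟨h, himp p hp.2⟩
        · exact Or.inr ⟨hp.1, h⟩
      calc _ ≤ _ := Finset.card_le_card hsub
        _ ≤ _ := Finset.card_union_le _ _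
        _ = _ := by rw [Finset.card_sdiff_of_subset hsub2]
    have := (Int.ofNat_le.mpr h1)
    push_cast [Nat.cast_sub hcard] at this
    omega
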